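/- The quotient of G by the normal closure of the singleton {a} is the trivial group; i.e., the element a normally generates G. -/

import Mathlib

/-! Killing `a` turns the first relation `b·a² = a³·b²` into `b = b²`, so `b` dies as well;
since `a` and `b` generate `G`, every homomorphism killing `a` is trivial. -/

/-- The generator `a` of the free group on two generators. -/
def fa : FreeGroup (Fin 2) := FreeGroup.of 0
/-- The generator `b` of the free group on two generators. -/
def fb : FreeGroup (Fin 2) := FreeGroup.of 1

/-- The two relators `(b·a²)·(a³·b²)⁻¹` and `(b²·a)·(a²·b³)⁻¹`. -/
def csRels : Set (FreeGroup (Fin 2)) :=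
  {(fb * fa ^ 2) * (fa ^ 3 * fb ^ 2)⁻¹, (fb ^ 2 * fa) * (fa ^ 2 * fb ^ 3)⁻¹}

/-- The group `G = ⟨a, b ∣ b·a² = a³·b², b²·a = a²·b³⟩`. -/
abbrev G : Type := PresentedGroup csRels

/-- The image of `a` in `G`. -/
def ga : G := PresentedGroup.of 0
/-- The image of `b` in `G`. -/
def gb : G := PresentedGroup.of 1

lemma gb_mul_ga_sq : gb * ga ^ 2 = ga ^ 3 * gb ^ 2 :=
  PresentedGroup.mk_eq_mk_of_mul_inv_mem (Or.inl rfl)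

lemma map_gb_eq_one_of_map_ga_eq_one {H : Type*} [Group H] (f : G →* H) (ha : f ga = 1) :
    f gb = 1 := by
  have h := congrArg f gb_mul_ga_sq
  simp only [map_mul, map_pow, ha, one_pow, mul_one, one_mul, pow_two] at h
  exact left_eq_mul.mp h

lemma monoidHom_eq_one_of_map_ga_eq_one {H : Type*} [Group H] (f : G →* H) (ha : f ga = 1) :
    f = 1 :=
  PresentedGroup.ext fun i => by
    fin_cases i
    · exact ha
    · exact map_gb_eq_one_of_map_ga_eq_one f ha

lemma normalClosure_ga_eq_top : Subgroup.normalClosure ({ga} : Set G) = ⊤ := by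
  set N := Subgroup.normalClosure ({ga} : Set G)
  have hπ : QuotientGroup.mk' N = 1 := monoidHom_eq_one_of_map_ga_eq_one _
    ((QuotientGroup.eq_one_iff _).2 (Subgroup.subset_normalClosure rfl))
  rw [← QuotientGroup.ker_mk' N, hπ, MonoidHom.ker_one]

/-- The quotient of `G` by the normal closure of `{a}` is the trivial group;
i.e. `a` normally generates `G`. -/
theorem a_normally_generates :
    ∀ x : G ⧸ Subgroup.normalClosure ({ga} : Set G), x = 1 := by
  rintro ⟨g⟩
  exact (QuotientGroup.eq_one_iff g).2 (normalClosure_ga_eq_top ▸ Subgroup.mem_top g)
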